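/- arXiv:1906.06625 — 5 statements merged into one kernel-verified Lean document; each statement's English description precedes it below -/
import Mathlib

section
/- Let 0 < α < 1. There exists a bounded continuous function u : [0,∞) → ℝ with u(0) = 0, locally Lipschitz on (0,∞), such that for every t > 0 the integral ∫_0^t (u(t) − u(s)) (t − s)^{−1−α} ds converges and ∫_0^t (u(t) − u(s)) (t − s)^{−1−α} ds + (u(t) − u(0)) t^{−α}/α ≥ 0 (i.e., the Caputo-type derivative of order α of u is nonnegative for all t > 0), and yet liminf_{t→∞} u(t) < limsup_{t→∞} u(t); in particular u has no limit as t → ∞. -/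
/-!
Take `u t = min t 1 + sin (c * log (max t 1)) / 8` with `c = 1 - α`: a ramp up to `1` followed by
a log-periodic oscillation, so `liminf u = 7/8 < 9/8 = limsup u`. For `t ≤ 1` every increment
`u t - u s`, `s ≤ t`, is nonnegative. For `t > 1` split the memory integral at `t / 2`. On
`[0, t/2]` the increments are `≥ -1/4` and the kernel is `≤ (t/2)^(-1-α)`, which costs at most
`(1/4) (t/2)^(-α)`. On `[t/2, t]` the slope of `u` is at most `c / (4t)`, which costs at most
`c / (8 (1 - α)) (t/2)^(-α) = (1/8) (t/2)^(-α)`. Since `(t/2)^(-α) ≤ 2 t^(-α)`, both losses are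
absorbed by the boundary term `(u t - u 0) t^(-α) / α ≥ (7/8) t^(-α)`.
-/

open MeasureTheory Filter Real Set

/-- The Caputo-type derivative `∂_t^α u (t)`, with the contribution of the constant extension of `u`
to `s < 0` integrated out. -/
noncomputable def caputoDeriv (α : ℝ) (u : ℝ → ℝ) (t : ℝ) : ℝ :=
  (∫ s in (0:ℝ)..t, (u t - u s) * (t - s) ^ (-1 - α)) + (u t - u 0) * t ^ (-α) / α

lemma intervalIntegrable_sub_rpow {r : ℝ} (hr : -1 < r) (a t : ℝ) :
    IntervalIntegrable (fun s => (t - s) ^ r) volume a t := by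
  simpa using (intervalIntegral.intervalIntegrable_rpow' (a := t - a) (b := 0) hr).comp_sub_left t

lemma integral_sub_rpow {r : ℝ} (hr : -1 < r) (a t : ℝ) :
    ∫ s in a..t, (t - s) ^ r = (t - a) ^ (r + 1) / (r + 1) := by
  rw [intervalIntegral.integral_comp_sub_left (fun x => x ^ r), integral_rpow (Or.inl hr), sub_self,
    zero_rpow (by linarith)]
  ring

lemma rpow_neg_eq_mul_rpow_neg_one_sub {x α : ℝ} (hx : 0 ≤ x) (hα : α ≠ 0) :
    x ^ (-α) = x * x ^ (-1 - α) := by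
  rw [mul_comm, ← rpow_add_one' hx (by contrapose! hα; linarith)]
  ring_nf

lemma LipschitzWith.intervalIntegrable_caputo {f : ℝ → ℝ} {α t : ℝ} {K : NNReal}
    (hf : LipschitzWith K f) (hα0 : 0 < α) (hα1 : α < 1) {a : ℝ} (hat : a ≤ t) :
    IntervalIntegrable (fun s => (f t - f s) * (t - s) ^ (-1 - α)) volume a t := by
  refine ((intervalIntegrable_sub_rpow (neg_lt_neg hα1) a t).const_mul K).mono_fun
    ((measurable_const.sub hf.continuous.measurable).mul
      ((measurable_const.sub measurable_id).pow_const _)).aestronglyMeasurable ?_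
  filter_upwards [ae_restrict_mem measurableSet_uIoc] with s hs
  rw [uIoc_of_le hat] at hs
  have hts : 0 ≤ t - s := sub_nonneg.2 hs.2
  have hlip : |f t - f s| ≤ K * (t - s) := by
    simpa [Real.dist_eq, abs_of_nonneg hts] using hf.dist_le_mul t s
  rw [norm_mul, norm_mul, Real.norm_eq_abs, Real.norm_of_nonneg (rpow_nonneg hts _),
    Real.norm_of_nonneg (rpow_nonneg hts _), Real.norm_of_nonneg K.coe_nonneg,
    rpow_neg_eq_mul_rpow_neg_one_sub hts hα0.ne', ← mul_assoc]
  exact mul_le_mul_of_nonneg_right hlip (rpow_nonneg hts _)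

lemma le_integral_caputo {f : ℝ → ℝ} {α t A B : ℝ} (hα0 : 0 < α) (hα1 : α < 1) (ht : 0 < t)
    (hf : IntervalIntegrable (fun s => (f t - f s) * (t - s) ^ (-1 - α)) volume 0 t)
    (hA : 0 ≤ A) (hfar : ∀ s ∈ Icc 0 (t / 2), -A ≤ f t - f s)
    (hnear : ∀ s ∈ Icc (t / 2) t, -B * (t - s) ≤ f t - f s) :
    -(A + B * t / (2 * (1 - α))) * (t / 2) ^ (-α) ≤
      ∫ s in (0:ℝ)..t, (f t - f s) * (t - s) ^ (-1 - α) := by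
  have ht2 : 0 < t / 2 := half_pos ht
  have hf₁ := hf.mono_set (uIcc_subset_uIcc left_mem_uIcc (mem_uIcc_of_le ht2.le (by linarith)))
  have hf₂ := hf.mono_set (uIcc_subset_uIcc (mem_uIcc_of_le ht2.le (by linarith)) right_mem_uIcc)
  have far : -A * (t / 2) ^ (-α) ≤ ∫ s in (0:ℝ)..t / 2, (f t - f s) * (t - s) ^ (-1 - α) := by
    calc -A * (t / 2) ^ (-α) = ∫ _ in (0:ℝ)..t / 2, -A * (t / 2) ^ (-1 - α) := by
          rw [intervalIntegral.integral_const, smul_eq_mul,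
            rpow_neg_eq_mul_rpow_neg_one_sub ht2.le hα0.ne']
          ring
      _ ≤ _ := by
        refine intervalIntegral.integral_mono_on ht2.le intervalIntegrable_const hf₁ fun s hs => ?_
        have hK : (t - s) ^ (-1 - α) ≤ (t / 2) ^ (-1 - α) :=
          rpow_le_rpow_of_nonpos ht2 (by linarith [hs.2]) (by linarith)
        nlinarith [hfar s hs, rpow_nonneg (show 0 ≤ t - s by linarith [hs.2]) (-1 - α)]
  have near : -(B * t / (2 * (1 - α))) * (t / 2) ^ (-α) ≤
      ∫ s in t / 2..t, (f t - f s) * (t - s) ^ (-1 - α) := by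
    calc -(B * t / (2 * (1 - α))) * (t / 2) ^ (-α) = ∫ s in t / 2..t, -B * (t - s) ^ (-α) := by
          rw [intervalIntegral.integral_const_mul, integral_sub_rpow (by linarith),
            show t - t / 2 = t / 2 by ring, rpow_add_one' ht2.le (by linarith)]
          field_simp
          ring
      _ ≤ _ := by
        refine intervalIntegral.integral_mono_on (by linarith)
          ((intervalIntegrable_sub_rpow (by linarith) _ _).const_mul _) hf₂ fun s hs => ?_
        have hts : 0 ≤ t - s := by linarith [hs.2]
        rw [rpow_neg_eq_mul_rpow_neg_one_sub hts hα0.ne', ← mul_assoc]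
        exact mul_le_mul_of_nonneg_right (hnear s hs) (rpow_nonneg hts _)
  rw [← intervalIntegral.integral_add_adjacent_intervals hf₁ hf₂]
  linarith

lemma rpow_neg_half_le {t α : ℝ} (ht : 0 ≤ t) (hα : α ≤ 1) : (t / 2) ^ (-α) ≤ 2 * t ^ (-α) := by
  rw [div_rpow ht zero_le_two, rpow_neg zero_le_two, div_inv_eq_mul, mul_comm]
  gcongr
  simpa using rpow_le_rpow_of_exponent_le one_le_two hα

lemma log_max_one_sub_le {s t : ℝ} (hst : s ≤ t) :
    log (max t 1) - log (max s 1) ≤ (t - s) / max s 1 := by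
  have hs : 0 < max s 1 := lt_max_of_lt_right one_pos
  calc log (max t 1) - log (max s 1) = log (max t 1 / max s 1) :=
        (log_div (by positivity) hs.ne').symm
    _ ≤ max t 1 / max s 1 - 1 := log_le_sub_one_of_pos (by positivity)
    _ = (max t 1 - max s 1) / max s 1 := by field_simp
    _ ≤ (t - s) / max s 1 := by
        gcongr ?_ / _
        exact (le_abs_self _).trans
          ((abs_max_sub_max_le_abs t s 1).trans (abs_of_nonneg (by linarith)).le)

lemma monotone_log_max_one : Monotone fun t : ℝ => log (max t 1) :=
  fun _ _ h => log_le_log (lt_max_of_lt_right one_pos) (max_le_max_right 1 h)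

lemma lipschitzWith_log_max_one : LipschitzWith 1 fun t : ℝ => log (max t 1) := by
  refine LipschitzWith.of_le_add_mul 1 fun x y => ?_
  push_cast
  rcases le_total x y with hxy | hyx
  · linarith [monotone_log_max_one hxy, dist_nonneg (x := x) (y := y)]
  · have := log_max_one_sub_le hyx
    have : (x - y) / max y 1 ≤ x - y := div_le_self (by linarith) (le_max_right _ _)
    rw [Real.dist_eq, abs_of_nonneg (by linarith)]
    linarith

noncomputable def logOscillation (c t : ℝ) : ℝ :=
  min t 1 + sin (c * log (max t 1)) / 8

section logOscillation

variable {c t : ℝ}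

lemma logOscillation_of_le_one (ht : t ≤ 1) : logOscillation c t = t := by
  simp [logOscillation, ht]

lemma logOscillation_of_one_le (ht : 1 ≤ t) : logOscillation c t = 1 + sin (c * log t) / 8 := by
  simp [logOscillation, ht]

lemma logOscillation_le (c t : ℝ) : logOscillation c t ≤ 9 / 8 := by
  have := sin_le_one (c * log (max t 1))
  have := min_le_right t 1
  unfold logOscillation
  linarith

lemma neg_le_logOscillation (ht : 0 ≤ t) : -(1 / 8) ≤ logOscillation c t := by
  have := neg_one_le_sin (c * log (max t 1))
  have := le_min ht zero_le_one
  unfold logOscillation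
  linarith

lemma le_logOscillation_of_one_le (ht : 1 ≤ t) : 7 / 8 ≤ logOscillation c t := by
  have := neg_one_le_sin (c * log t)
  rw [logOscillation_of_one_le ht]
  linarith

lemma exists_lipschitzWith_logOscillation (c : ℝ) : ∃ K, LipschitzWith K (logOscillation c) := by
  obtain ⟨K, hK⟩ : ∃ K, LipschitzWith K _ := ⟨_, (LipschitzWith.id.min_const 1).add
    ((lipschitzWith_smul (8⁻¹ : ℝ)).comp
      (lipschitzWith_sin.comp ((lipschitzWith_smul c).comp lipschitzWith_log_max_one)))⟩
  exact ⟨K, fun x y => by simpa [logOscillation, div_eq_inv_mul] using hK x y⟩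

lemma logOscillation_sub_ge {s : ℝ} (hc : 0 ≤ c) (hst : s ≤ t) :
    -(c / 8) * ((t - s) / max s 1) ≤ logOscillation c t - logOscillation c s := by
  have hlog := log_max_one_sub_le hst
  have hsin := neg_abs_le (sin (c * log (max t 1)) - sin (c * log (max s 1)))
  have hsin' := abs_sin_sub_sin_le (c * log (max t 1)) (c * log (max s 1))
  rw [← mul_sub, abs_mul, abs_of_nonneg hc,
    abs_of_nonneg (sub_nonneg.2 (monotone_log_max_one hst))] at hsin'
  have := min_le_min_right 1 hst
  unfold logOscillation
  nlinarith

lemma frequently_logOscillation_eq (hc : 0 < c) (θ : ℝ) :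
    ∃ᶠ x in atTop, logOscillation c x = 1 + sin θ / 8 := by
  have hx : Tendsto (fun n : ℕ => exp ((θ + n * (2 * π)) / c)) atTop atTop :=
    tendsto_exp_atTop.comp <| Tendsto.atTop_div_const hc <| tendsto_atTop_add_const_left _ _ <|
      tendsto_natCast_atTop_atTop.atTop_mul_const (by positivity)
  have hsin : ∃ᶠ x in atTop, sin (c * log x) = sin θ := hx.frequently <| .of_forall fun n => by
    rw [log_exp, mul_div_cancel₀ _ hc.ne', sin_add_nat_mul_two_pi]
  exact (hsin.and_eventually (eventually_ge_atTop 1)).mono fun x ⟨h, hx⟩ => by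
    rw [logOscillation_of_one_le hx, h]

lemma liminf_logOscillation_lt_limsup (hc : 0 < c) :
    liminf (logOscillation c) atTop < limsup (logOscillation c) atTop := by
  have hlo : liminf (logOscillation c) atTop ≤ 7 / 8 := by
    refine liminf_le_of_frequently_le
      ((frequently_logOscillation_eq hc (-(π / 2))).mono fun x hx => ?_)
      (isBoundedUnder_of_eventually_ge
        ((eventually_ge_atTop 0).mono fun _ => neg_le_logOscillation))
    rw [hx, sin_neg, sin_pi_div_two]
    norm_num
  have hhi : 9 / 8 ≤ limsup (logOscillation c) atTop := by
    refine le_limsup_of_frequently_le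
      ((frequently_logOscillation_eq hc (π / 2)).mono fun x hx => ?_)
      (isBoundedUnder_of_eventually_le (.of_forall (logOscillation_le c)))
    rw [hx, sin_pi_div_two]
    norm_num
  linarith

lemma logOscillation_sub_ge_of_one_le (ht : 1 ≤ t) (s : ℝ) :
    -(1 / 4) ≤ logOscillation c t - logOscillation c s := by
  linarith [le_logOscillation_of_one_le (c := c) ht, logOscillation_le c s]

lemma logOscillation_sub_ge_of_half_le {s : ℝ} (hc : 0 ≤ c) (ht : 0 < t) (hs : s ∈ Icc (t / 2) t) :
    -(c / (4 * t)) * (t - s) ≤ logOscillation c t - logOscillation c s := by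
  have hslope : (t - s) / max s 1 ≤ (t - s) / (t / 2) :=
    div_le_div_of_nonneg_left (by linarith [hs.2]) (by positivity) (hs.1.trans (le_max_left _ _))
  calc -(c / (4 * t)) * (t - s) = -(c / 8) * ((t - s) / (t / 2)) := by field_simp; ring
    _ ≤ -(c / 8) * ((t - s) / max s 1) := by nlinarith
    _ ≤ _ := logOscillation_sub_ge hc hs.2

lemma caputoDeriv_logOscillation_nonneg {α : ℝ} (hα0 : 0 < α) (hα1 : α < 1) (ht : 0 < t) :
    0 ≤ caputoDeriv α (logOscillation (1 - α)) t := by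
  rw [caputoDeriv, logOscillation_of_le_one zero_le_one, sub_zero]
  rcases le_or_gt t 1 with ht1 | ht1
  · rw [logOscillation_of_le_one ht1]
    refine add_nonneg (intervalIntegral.integral_nonneg ht.le fun s hs => ?_) (by positivity)
    rw [logOscillation_of_le_one (hs.2.trans ht1)]
    exact mul_nonneg (sub_nonneg.2 hs.2) (rpow_nonneg (sub_nonneg.2 hs.2) _)
  obtain ⟨K, hK⟩ := exists_lipschitzWith_logOscillation (1 - α)
  have hint := le_integral_caputo (A := 1 / 4) (B := (1 - α) / (4 * t)) hα0 hα1 ht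
    (hK.intervalIntegrable_caputo hα0 hα1 ht.le) (by norm_num)
    (fun s _ => logOscillation_sub_ge_of_one_le ht1.le s)
    (fun s hs => logOscillation_sub_ge_of_half_le (by linarith) ht hs)
  have hconst : 1 / 4 + (1 - α) / (4 * t) * t / (2 * (1 - α)) = 3 / 8 := by
    have : 1 - α ≠ 0 := by linarith
    field_simp
    ring
  have hboundary : 7 / 8 * t ^ (-α) ≤ logOscillation (1 - α) t * t ^ (-α) / α := by
    have hut : 7 / 8 ≤ logOscillation (1 - α) t := le_logOscillation_of_one_le ht1.le
    have hP : 0 < t ^ (-α) := rpow_pos_of_pos ht _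
    calc 7 / 8 * t ^ (-α) ≤ logOscillation (1 - α) t * t ^ (-α) := by gcongr
      _ ≤ logOscillation (1 - α) t * t ^ (-α) / α := le_div_self (by positivity) hα0 hα1.le
  rw [hconst] at hint
  linarith [rpow_neg_half_le ht.le hα1.le, rpow_nonneg ht.le (-α)]

end logOscillation

/-- For `0 < α < 1` there is a bounded continuous function `u` on `[0,∞)`,
with `u 0 = 0`, locally Lipschitz on `(0,∞)`, whose Caputo-type derivative of order `α`
is nonnegative for all `t > 0`, and yet `liminf u < limsup u` at infinity; in particular
`u` has no limit at infinity. -/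
theorem stmt_0 (α : ℝ) (hα0 : 0 < α) (hα1 : α < 1) :
    ∃ u : ℝ → ℝ,
      (∃ M : ℝ, ∀ t, 0 ≤ t → |u t| ≤ M) ∧
      ContinuousOn u (Set.Ici 0) ∧
      u 0 = 0 ∧
      (∀ x ∈ Set.Ioi (0:ℝ), ∃ L : NNReal, ∃ U ∈ nhdsWithin x (Set.Ioi (0:ℝ)),
        LipschitzOnWith L u U) ∧
      (∀ t, 0 < t →
        IntervalIntegrable (fun s => (u t - u s) * (t - s) ^ (-1 - α)) volume 0 t ∧
        0 ≤ (∫ s in (0:ℝ)..t, (u t - u s) * (t - s) ^ (-1 - α))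
              + (u t - u 0) * t ^ (-α) / α) ∧
      liminf u atTop < limsup u atTop ∧
      (∀ l : ℝ, ¬ Tendsto u atTop (nhds l)) := by
  obtain ⟨K, hK⟩ := exists_lipschitzWith_logOscillation (1 - α)
  have hosc := liminf_logOscillation_lt_limsup (sub_pos.2 hα1)
  refine ⟨logOscillation (1 - α), ⟨9 / 8, fun t ht => abs_le.2 ⟨?_, logOscillation_le _ t⟩⟩,
    hK.continuous.continuousOn, logOscillation_of_le_one zero_le_one,
    fun _ _ => ⟨K, univ, univ_mem, hK.lipschitzOnWith⟩,
    fun t ht => ⟨hK.intervalIntegrable_caputo hα0 hα1 ht.le,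
      caputoDeriv_logOscillation_nonneg hα0 hα1 ht⟩, hosc, fun l hl => ?_⟩
  · linarith [neg_le_logOscillation (c := 1 - α) ht]
  · rw [hl.liminf_eq, hl.limsup_eq] at hosc
    exact lt_irrefl l hosc
end

section
/- Let 0 < α < 1, A > 0 and k ≥ 1. Suppose E : [0,∞) → ℝ is continuous, positive, nonincreasing, continuously differentiable on (0,∞), with E(0) = 1, and for every t > 0 the integral (1/Γ(1−α)) ∫_0^t E'(s)(t−s)^{−α} ds converges absolutely and equals −A E(t)^k. Then for every ε ∈ (0, α/k) there exists a constant C_ε > 0 (depending only on α, k, A, ε) such that E(t) ≤ C_ε t^{−(α/k − ε)} for all t ≥ 1. -/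
/-!
Applying the Riemann–Liouville integral of order `α` undoes the Caputo derivative. By Tonelli,
`∫₀ᵗ (t-τ)^(α-1) ∫₀^τ (-E' s) (τ-s)^(-α) ds dτ = ∫₀ᵗ (-E' s) B(s,t) ds`, where
`B(s,t) = ∫ₛᵗ (t-τ)^(α-1) (τ-s)^(-α) dτ` is the Beta value `Γ(α) Γ(1-α) ≤ 1/(1-α) + 1/α`
(freeze one factor on each half of `[s, t]`), and `∫₀ᵗ (-E') ≤ E 0 - E t ≤ 1` holds for every
antitone `E` by Lebesgue's differentiation theorem. Since `E` is nonincreasing, the left side is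
at least `Γ(1-α) A E(t)^k t^α / α`. Hence `E(t)^k t^α` is bounded, that is `E t = O(t^(-α/k))`.
-/

open MeasureTheory Filter Set ENNReal Topology

theorem lintegral_Ioo_sub_rpow {γ a b : ℝ} (hγ : -1 < γ) (hab : a ≤ b) :
    ∫⁻ x in Ioo a b, ENNReal.ofReal ((x - a) ^ γ) =
      ENNReal.ofReal ((b - a) ^ (γ + 1) / (γ + 1)) := by
  have hint : IntervalIntegrable (fun x => (x - a) ^ γ) volume a b := by
    simpa using
      (intervalIntegral.intervalIntegrable_rpow' hγ (a := 0) (b := b - a)).comp_sub_right a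
  rw [← ofReal_integral_eq_lintegral_ofReal
      ((intervalIntegrable_iff_integrableOn_Ioo_of_le hab).mp hint)
      (ae_restrict_of_forall_mem measurableSet_Ioo fun x hx =>
        Real.rpow_nonneg (sub_nonneg.mpr hx.1.le) _),
    ← integral_Ioc_eq_integral_Ioo, ← intervalIntegral.integral_of_le hab,
    intervalIntegral.integral_comp_sub_right (· ^ γ), integral_rpow (.inl hγ), sub_self,
    Real.zero_rpow (by linarith), sub_zero]

theorem lintegral_Ioo_rpow_sub {γ a b : ℝ} (hγ : -1 < γ) (hab : a ≤ b) :
    ∫⁻ x in Ioo a b, ENNReal.ofReal ((b - x) ^ γ) =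
      ENNReal.ofReal ((b - a) ^ (γ + 1) / (γ + 1)) := by
  have hint : IntervalIntegrable (fun x => (b - x) ^ γ) volume a b := by
    simpa using
      ((intervalIntegral.intervalIntegrable_rpow' hγ (a := 0) (b := b - a)).comp_sub_left b).symm
  rw [← ofReal_integral_eq_lintegral_ofReal
      ((intervalIntegrable_iff_integrableOn_Ioo_of_le hab).mp hint)
      (ae_restrict_of_forall_mem measurableSet_Ioo fun x hx =>
        Real.rpow_nonneg (sub_nonneg.mpr hx.2.le) _),
    ← integral_Ioc_eq_integral_Ioo, ← intervalIntegral.integral_of_le hab,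
    intervalIntegral.integral_comp_sub_left (· ^ γ), integral_rpow (.inl hγ), sub_self,
    Real.zero_rpow (by linarith), sub_zero]

theorem lintegral_Ioo_lintegral_Ioo_swap {a b : ℝ} {F : ℝ → ℝ → ℝ≥0∞}
    (hF : Measurable (Function.uncurry F)) :
    ∫⁻ x in Ioo a b, ∫⁻ y in Ioo a x, F x y = ∫⁻ y in Ioo a b, ∫⁻ x in Ioo y b, F x y := by
  set T : Set (ℝ × ℝ) := {p | a < p.2 ∧ p.2 < p.1 ∧ p.1 < b}
  have hT : MeasurableSet T := by measurability
  have hxy : ∀ x, (Ioo a b).indicator (fun x => ∫⁻ y in Ioo a x, F x y) x =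
      ∫⁻ y, T.indicator (Function.uncurry F) (x, y) := by
    intro x
    by_cases hx : x ∈ Ioo a b
    · rw [indicator_of_mem hx, ← lintegral_indicator measurableSet_Ioo]
      congr 1 with y
      simp only [indicator_apply, T, mem_ofPred_eq, mem_Ioo, Function.uncurry_apply_pair]
      grind
    · rw [indicator_of_notMem hx, eq_comm, lintegral_eq_zero_iff (by fun_prop)]
      exact Eventually.of_forall fun y =>
        indicator_of_notMem (fun h => hx ⟨h.1.trans h.2.1, h.2.2⟩) _
  have hyx : ∀ y, (Ioo a b).indicator (fun y => ∫⁻ x in Ioo y b, F x y) y =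
      ∫⁻ x, T.indicator (Function.uncurry F) (x, y) := by
    intro y
    by_cases hy : y ∈ Ioo a b
    · rw [indicator_of_mem hy, ← lintegral_indicator measurableSet_Ioo]
      congr 1 with x
      simp only [indicator_apply, T, mem_ofPred_eq, mem_Ioo, Function.uncurry_apply_pair]
      grind
    · rw [indicator_of_notMem hy, eq_comm, lintegral_eq_zero_iff (by fun_prop)]
      exact Eventually.of_forall fun x =>
        indicator_of_notMem (fun h => hy ⟨h.1, h.2.1.trans h.2.2⟩) _
  rw [← lintegral_indicator measurableSet_Ioo, ← lintegral_indicator measurableSet_Ioo]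
  simp only [hxy, hyx]
  exact lintegral_lintegral_swap (hF.indicator hT).aemeasurable

theorem lintegral_Ioo_rpow_sub_mul_sub_rpow_le {α s t : ℝ} (hα0 : 0 < α) (hα1 : α < 1)
    (hst : s < t) :
    ∫⁻ τ in Ioo s t, ENNReal.ofReal ((t - τ) ^ (α - 1)) * ENNReal.ofReal ((τ - s) ^ (-α)) ≤
      ENNReal.ofReal (1 / (1 - α) + 1 / α) := by
  set m := (s + t) / 2
  have hsm : s < m := by simp only [m]; linarith
  have hmt : m < t := by simp only [m]; linarith
  have hh : t - m = m - s := by simp only [m]; ring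
  have hpos : 0 < m - s := by linarith
  have hleft : ∫⁻ τ in Ioo s m,
      ENNReal.ofReal ((t - τ) ^ (α - 1)) * ENNReal.ofReal ((τ - s) ^ (-α)) ≤
        ENNReal.ofReal (1 / (1 - α)) := calc
    _ ≤ ∫⁻ τ in Ioo s m,
          ENNReal.ofReal ((m - s) ^ (α - 1)) * ENNReal.ofReal ((τ - s) ^ (-α)) :=
      setLIntegral_mono' measurableSet_Ioo fun τ hτ => by
        gcongr ENNReal.ofReal ?_ * _
        rw [← hh]
        exact Real.rpow_le_rpow_of_nonpos (by linarith) (by linarith [hτ.2]) (by linarith)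
    _ = ENNReal.ofReal (1 / (1 - α)) := by
      rw [lintegral_const_mul' _ _ ofReal_ne_top, lintegral_Ioo_sub_rpow (by linarith) hsm.le,
        ← ofReal_mul (Real.rpow_nonneg hpos.le _), mul_div_assoc', ← Real.rpow_add hpos,
        show α - 1 + (-α + 1) = 0 by ring, Real.rpow_zero, neg_add_eq_sub]
  have hright : ∫⁻ τ in Ico m t,
      ENNReal.ofReal ((t - τ) ^ (α - 1)) * ENNReal.ofReal ((τ - s) ^ (-α)) ≤
        ENNReal.ofReal (1 / α) := calc
    _ ≤ ∫⁻ τ in Ioo m t,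
          ENNReal.ofReal ((t - τ) ^ (α - 1)) * ENNReal.ofReal ((m - s) ^ (-α)) := by
      rw [setLIntegral_congr Ioo_ae_eq_Ico.symm]
      refine setLIntegral_mono' measurableSet_Ioo fun τ hτ => ?_
      gcongr _ * ENNReal.ofReal ?_
      exact Real.rpow_le_rpow_of_nonpos hpos (by linarith [hτ.1]) (by linarith)
    _ = ENNReal.ofReal (1 / α) := by
      rw [lintegral_mul_const' _ _ ofReal_ne_top, lintegral_Ioo_rpow_sub (by linarith) hmt.le,
        hh, mul_comm, ← ofReal_mul (Real.rpow_nonneg hpos.le _), mul_div_assoc',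
        ← Real.rpow_add hpos, show -α + (α - 1 + 1) = 0 by ring, Real.rpow_zero, sub_add_cancel]
  calc _ = ∫⁻ τ in Ioo s m ∪ Ico m t,
        ENNReal.ofReal ((t - τ) ^ (α - 1)) * ENNReal.ofReal ((τ - s) ^ (-α)) := by
        rw [Ioo_union_Ico_eq_Ioo hsm hmt.le]
    _ ≤ _ := lintegral_union_le _ _ _
    _ ≤ _ := add_le_add hleft hright
    _ = _ := (ofReal_add (by positivity) (by positivity)).symm

theorem lintegral_Ioo_rpow_sub_mul_lintegral_Ioo_le {α a t : ℝ} (hα0 : 0 < α) (hα1 : α < 1)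
    {f : ℝ → ℝ≥0∞} (hf : Measurable f) :
    ∫⁻ τ in Ioo a t, ENNReal.ofReal ((t - τ) ^ (α - 1)) *
        ∫⁻ s in Ioo a τ, f s * ENNReal.ofReal ((τ - s) ^ (-α)) ≤
      ENNReal.ofReal (1 / (1 - α) + 1 / α) * ∫⁻ s in Ioo a t, f s := calc
  _ = ∫⁻ τ in Ioo a t, ∫⁻ s in Ioo a τ,
        f s * (ENNReal.ofReal ((t - τ) ^ (α - 1)) * ENNReal.ofReal ((τ - s) ^ (-α))) := by
    congr 1 with τ
    rw [← lintegral_const_mul' _ _ ofReal_ne_top]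
    congr 1 with s
    ring
  _ = ∫⁻ s in Ioo a t, ∫⁻ τ in Ioo s t,
        f s * (ENNReal.ofReal ((t - τ) ^ (α - 1)) * ENNReal.ofReal ((τ - s) ^ (-α))) :=
    lintegral_Ioo_lintegral_Ioo_swap (by fun_prop)
  _ ≤ ∫⁻ s in Ioo a t, f s * ENNReal.ofReal (1 / (1 - α) + 1 / α) := by
    refine setLIntegral_mono' measurableSet_Ioo fun s hs => ?_
    rw [lintegral_const_mul _ (by fun_prop)]
    gcongr
    exact lintegral_Ioo_rpow_sub_mul_sub_rpow_le hα0 hα1 hs.2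
  _ = _ := by rw [lintegral_mul_const _ hf, mul_comm]

theorem AntitoneOn.deriv_nonpos_of_mem_nhds {f : ℝ → ℝ} {s : Set ℝ} {x : ℝ}
    (hf : AntitoneOn f s) (hs : s ∈ 𝓝 x) : deriv f x ≤ 0 := by
  rw [← derivWithin_of_mem_nhds hs]
  exact hf.derivWithin_nonpos

theorem AntitoneOn.lintegral_neg_deriv_le {f : ℝ → ℝ} {a b : ℝ} (hab : a ≤ b)
    (hf : AntitoneOn f (Icc a b)) :
    ∫⁻ x in Ioo a b, ENNReal.ofReal (-deriv f x) ≤ ENNReal.ofReal (f a - f b) := by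
  have hneg : MonotoneOn (-f) (uIcc a b) := uIcc_of_le hab ▸ hf.neg
  have hint := hneg.intervalIntegrable_deriv
  rw [deriv.neg', intervalIntegrable_iff_integrableOn_Ioo_of_le hab] at hint
  rw [← ofReal_integral_eq_lintegral_ofReal hint (ae_restrict_of_forall_mem measurableSet_Ioo
      fun x hx => neg_nonneg.mpr (hf.deriv_nonpos_of_mem_nhds (Icc_mem_nhds hx.1 hx.2))),
    ← integral_Ioc_eq_integral_Ioo, ← intervalIntegral.integral_of_le hab]
  have hfab : 0 ≤ (-f) b - (-f) a := by
    simpa using hf (left_mem_Icc.2 hab) (right_mem_Icc.2 hab) hab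
  have hmem := hneg.intervalIntegral_deriv_mem_uIcc
  rw [uIcc_of_le hfab, deriv.neg'] at hmem
  refine ofReal_le_ofReal (hmem.2.trans_eq ?_)
  simp only [Pi.neg_apply]
  ring

theorem le_rpow_mul_rpow_neg_of_rpow_mul_rpow_le {x t k α K : ℝ} (hx : 0 ≤ x) (ht : 0 < t)
    (hk : 0 < k) (h : x ^ k * t ^ α ≤ K) : x ≤ K ^ (1 / k) * t ^ (-(α / k)) := by
  have hK : 0 ≤ K := le_trans (by positivity) h
  have hxk : x ^ k ≤ K * t ^ (-α) := by
    rwa [Real.rpow_neg ht.le, ← div_eq_mul_inv, le_div_iff₀ (by positivity)]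
  calc x = (x ^ k) ^ (1 / k) := by
        rw [← Real.rpow_mul hx, mul_one_div_cancel hk.ne', Real.rpow_one]
    _ ≤ (K * t ^ (-α)) ^ (1 / k) := by gcongr
    _ = K ^ (1 / k) * t ^ (-(α / k)) := by
      rw [Real.mul_rpow hK (by positivity), ← Real.rpow_mul ht.le]
      ring_nf

theorem gamma_mul_rpow_mul_le_of_caputo {α A k : ℝ} (hα0 : 0 < α) (hα1 : α < 1) (hA : 0 ≤ A)
    (hk : 0 ≤ k) {E : ℝ → ℝ} (hpos : ∀ t : ℝ, 0 ≤ t → 0 < E t) (hmono : AntitoneOn E (Ici 0))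
    (hE0 : E 0 = 1)
    (hODE : ∀ t : ℝ, 0 < t →
      IntegrableOn (fun s => deriv E s * (t - s) ^ (-α)) (Ioc 0 t) ∧
      (1 / Real.Gamma (1 - α)) * (∫ s in (0:ℝ)..t, deriv E s * (t - s) ^ (-α)) = -(A * E t ^ k))
    {t : ℝ} (ht : 0 < t) :
    Real.Gamma (1 - α) * (A * E t ^ k) * (t ^ α / α) ≤ 1 / (1 - α) + 1 / α := by
  have hΓ : 0 < Real.Gamma (1 - α) := Real.Gamma_pos_of_pos (by linarith)
  have hderiv (s : ℝ) (hs : 0 < s) : deriv E s ≤ 0 :=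
    hmono.deriv_nonpos_of_mem_nhds (Ici_mem_nhds hs)
  have hcaputo (τ : ℝ) (hτ : 0 < τ) :
      ∫⁻ s in Ioo 0 τ, ENNReal.ofReal (-deriv E s) * ENNReal.ofReal ((τ - s) ^ (-α)) =
        ENNReal.ofReal (Real.Gamma (1 - α) * (A * E τ ^ k)) := by
    obtain ⟨hint, heq⟩ := hODE τ hτ
    rw [setLIntegral_congr_fun measurableSet_Ioo fun s hs =>
        (ofReal_mul (neg_nonneg.mpr (hderiv s hs.1))).symm,
      ← ofReal_integral_eq_lintegral_ofReal ((hint.mono_set Ioo_subset_Ioc_self).neg.congr_fun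
          (fun s _ => (neg_mul _ _).symm) measurableSet_Ioo)
        (ae_restrict_of_forall_mem measurableSet_Ioo fun s hs =>
          mul_nonneg (neg_nonneg.mpr (hderiv s hs.1))
            (Real.rpow_nonneg (sub_nonneg.mpr hs.2.le) _)),
      ← integral_Ioc_eq_integral_Ioo, ← intervalIntegral.integral_of_le hτ.le]
    congr 1
    field_simp at heq
    simp only [neg_mul, intervalIntegral.integral_neg, heq]
    ring
  have htotal : ∫⁻ s in Ioo 0 t, ENNReal.ofReal (-deriv E s) ≤ 1 :=
    ((hmono.mono Icc_subset_Ici_self).lintegral_neg_deriv_le ht.le).trans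
      (ofReal_le_one.mpr (by linarith [hpos t ht.le]))
  rw [← ofReal_le_ofReal_iff (by positivity)]
  calc ENNReal.ofReal (Real.Gamma (1 - α) * (A * E t ^ k) * (t ^ α / α))
      = ∫⁻ τ in Ioo 0 t, ENNReal.ofReal ((t - τ) ^ (α - 1)) *
          ENNReal.ofReal (Real.Gamma (1 - α) * (A * E t ^ k)) := by
        rw [lintegral_mul_const' _ _ ofReal_ne_top, lintegral_Ioo_rpow_sub (by linarith) ht.le,
          sub_zero, sub_add_cancel, mul_comm, ofReal_mul (by positivity)]
    _ ≤ ∫⁻ τ in Ioo 0 t, ENNReal.ofReal ((t - τ) ^ (α - 1)) *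
          ENNReal.ofReal (Real.Gamma (1 - α) * (A * E τ ^ k)) := by
        refine setLIntegral_mono' measurableSet_Ioo fun τ hτ => ?_
        gcongr
        · exact (hpos t ht.le).le
        · exact hmono hτ.1.le ht.le hτ.2.le
    _ = ∫⁻ τ in Ioo 0 t, ENNReal.ofReal ((t - τ) ^ (α - 1)) *
          ∫⁻ s in Ioo 0 τ, ENNReal.ofReal (-deriv E s) * ENNReal.ofReal ((τ - s) ^ (-α)) :=
        setLIntegral_congr_fun measurableSet_Ioo fun τ hτ => by rw [hcaputo τ hτ.1]
    _ ≤ ENNReal.ofReal (1 / (1 - α) + 1 / α) * ∫⁻ s in Ioo 0 t, ENNReal.ofReal (-deriv E s) :=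
        lintegral_Ioo_rpow_sub_mul_lintegral_Ioo_le hα0 hα1 (by fun_prop)
    _ ≤ ENNReal.ofReal (1 / (1 - α) + 1 / α) := mul_le_of_le_one_right' htotal

theorem stmt_9_general (α A k : ℝ) (hα0 : 0 < α) (hα1 : α < 1) (hA : 0 < A) (hk : 1 ≤ k)
    (E : ℝ → ℝ)
    (hpos : ∀ t : ℝ, 0 ≤ t → 0 < E t)
    (hmono : AntitoneOn E (Set.Ici 0))
    (hE0 : E 0 = 1)
    (hODE : ∀ t : ℝ, 0 < t →
      MeasureTheory.IntegrableOn (fun s => deriv E s * (t - s) ^ (-α)) (Set.Ioc 0 t)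
        MeasureTheory.volume ∧
      (1 / Real.Gamma (1 - α)) * (∫ s in (0:ℝ)..t, deriv E s * (t - s) ^ (-α))
        = -(A * E t ^ k)) :
    ∀ ε : ℝ, 0 < ε → ε < α / k →
      ∃ Cε : ℝ, 0 < Cε ∧ ∀ t : ℝ, 1 ≤ t → E t ≤ Cε * t ^ (-(α / k - ε)) := by
  intro ε hε _
  have hΓ : 0 < Real.Gamma (1 - α) := Real.Gamma_pos_of_pos (by linarith)
  set K := (1 / (1 - α) + 1 / α) * α / (Real.Gamma (1 - α) * A)
  have hK (t : ℝ) (ht : 0 < t) : E t ^ k * t ^ α ≤ K := by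
    have h := gamma_mul_rpow_mul_le_of_caputo hα0 hα1 hA.le (by linarith) hpos hmono hE0 hODE ht
    rw [le_div_iff₀ (by positivity)]
    calc E t ^ k * t ^ α * (Real.Gamma (1 - α) * A)
        = Real.Gamma (1 - α) * (A * E t ^ k) * (t ^ α / α) * α := by field_simp
      _ ≤ (1 / (1 - α) + 1 / α) * α := by gcongr
  refine ⟨K ^ (1 / k), by positivity, fun t ht => ?_⟩
  calc E t ≤ K ^ (1 / k) * t ^ (-(α / k)) :=
        le_rpow_mul_rpow_neg_of_rpow_mul_rpow_le (hpos t (by linarith)).le (by linarith)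
          (by linarith) (hK t (by linarith))
    _ ≤ K ^ (1 / k) * t ^ (-(α / k - ε)) := by gcongr; linarith

/-- If `E` is a continuous, positive, nonincreasing solution on `[0,∞)` of
`∂_t^α E = -A E^k` (classical Caputo derivative, absolutely convergent integral), `E(0)=1`,
then for every `ε ∈ (0, α/k)` there is `C_ε > 0` with `E t ≤ C_ε t^{-(α/k - ε)}` for all
`t ≥ 1`. -/
theorem stmt_9 (α A k : ℝ) (hα0 : 0 < α) (hα1 : α < 1) (hA : 0 < A) (hk : 1 ≤ k)
    (E : ℝ → ℝ)
    (hcont : ContinuousOn E (Set.Ici 0))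
    (hpos : ∀ t : ℝ, 0 ≤ t → 0 < E t)
    (hmono : AntitoneOn E (Set.Ici 0))
    (hdiff : ContDiffOn ℝ 1 E (Set.Ioi 0))
    (hE0 : E 0 = 1)
    (hODE : ∀ t : ℝ, 0 < t →
      MeasureTheory.IntegrableOn (fun s => deriv E s * (t - s) ^ (-α)) (Set.Ioc 0 t)
        MeasureTheory.volume ∧
      (1 / Real.Gamma (1 - α)) * (∫ s in (0:ℝ)..t, deriv E s * (t - s) ^ (-α))
        = -(A * E t ^ k)) :
    ∀ ε : ℝ, 0 < ε → ε < α / k →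
      ∃ Cε : ℝ, 0 < Cε ∧ ∀ t : ℝ, 1 ≤ t → E t ≤ Cε * t ^ (-(α / k - ε)) :=
  stmt_9_general α A k hα0 hα1 hA hk E hpos hmono hE0 hODE
end

section
/- Let 0 < α < 1 and p > 0, and let φ(s) = (1 + s)^{−p} for s ≥ 0, extended by φ(s) = 1 for s < 0. Then there exists a constant c > 0, depending only on α and p, such that for every t > 1, −c t^{−α} ≤ ∫_{−∞}^t (φ(t) − φ(s)) (t − s)^{−1−α} ds ≤ 0. -/
open MeasureTheory Filter

private lemma sub_map_integrableOn_iff (f : ℝ → ℝ) (t : ℝ) (S : Set ℝ) :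
    IntegrableOn (fun s => f (t - s)) ((fun s : ℝ => t - s) ⁻¹' S) volume ↔
      IntegrableOn f S volume :=
  (Measure.measurePreserving_sub_left volume t).integrableOn_comp_preimage
    (Homeomorph.subLeft t).measurableEmbedding

private lemma sub_map_integral (f : ℝ → ℝ) (t : ℝ) (S : Set ℝ) :
    ∫ s in (fun s : ℝ => t - s) ⁻¹' S, f (t - s) = ∫ x in S, f x := by
  have me : MeasurableEmbedding (fun s : ℝ => t - s) :=
    (Homeomorph.subLeft t).measurableEmbedding
  have h := me.setIntegral_map (μ := volume) f S
  rw [(Measure.measurePreserving_sub_left volume t).map_eq] at h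
  exact h.symm

private lemma rpow_neg_sub_le (p : ℝ) (hp : 0 < p) {a b : ℝ} (ha : 1 ≤ a) (hab : a ≤ b) :
    a ^ (-p) - b ^ (-p) ≤ p * a ^ (-p - 1) * (b - a) := by
  rcases eq_or_lt_of_le hab with rfl | hab'
  · simp
  have ha0 : (0 : ℝ) < a := by linarith
  obtain ⟨c, hc, hc'⟩ := exists_hasDerivAt_eq_slope (fun x => x ^ (-p))
    (fun x => -p * x ^ (-p - 1)) hab'
    (by
      refine ContinuousOn.rpow_const continuousOn_id fun x hx => Or.inl ?_
      have h1 : a ≤ x := hx.1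
      have h2 : (0 : ℝ) < x := by linarith
      exact ne_of_gt h2)
    (by
      intro x hx
      have hx0 : x ≠ 0 := by
        have h1 : a < x := hx.1
        have h2 : (0 : ℝ) < x := by linarith
        exact ne_of_gt h2
      simpa using (Real.hasDerivAt_rpow_const (p := -p) (Or.inl hx0)))
  have hba : (0 : ℝ) < b - a := by linarith
  rw [eq_div_iff hba.ne'] at hc'
  have h1 : a ^ (-p) - b ^ (-p) = p * c ^ (-p - 1) * (b - a) := by nlinarith [hc']
  have h2 : c ^ (-p - 1) ≤ a ^ (-p - 1) :=
    Real.rpow_le_rpow_of_nonpos ha0 hc.1.le (by linarith)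
  rw [h1]
  have := mul_le_mul_of_nonneg_right (mul_le_mul_of_nonneg_left h2 hp.le) hba.le
  linarith

/-- For `0 < α < 1`, `p > 0` and `φ(s) = (1+s)^{-p}` for `s ≥ 0` extended by
`φ(s) = 1` for `s < 0`, there is `c > 0` depending only on `α, p` such that for every
`t > 1`, `-c t^{-α} ≤ ∫_{-∞}^t (φ(t) - φ(s)) (t-s)^{-1-α} ds ≤ 0` (the integral
converging). -/
theorem stmt_10 (α p : ℝ) (hα0 : 0 < α) (hα1 : α < 1) (hp : 0 < p)
    (φ : ℝ → ℝ) (hφ : ∀ s : ℝ, φ s = if s < 0 then 1 else (1 + s) ^ (-p)) :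
    ∃ c : ℝ, 0 < c ∧ ∀ t : ℝ, 1 < t →
      MeasureTheory.IntegrableOn (fun s => (φ t - φ s) * (t - s) ^ (-1 - α)) (Set.Iio t)
        MeasureTheory.volume ∧
      -(c * t ^ (-α)) ≤ (∫ s in Set.Iio t, (φ t - φ s) * (t - s) ^ (-1 - α)) ∧
      (∫ s in Set.Iio t, (φ t - φ s) * (t - s) ^ (-1 - α)) ≤ 0 := by
  have h1α : (0 : ℝ) < 1 - α := by linarith
  have h2α : (0 : ℝ) < 2 ^ α := Real.rpow_pos_of_pos two_pos α
  have h2pα : (0 : ℝ) < 2 ^ (p + α) := Real.rpow_pos_of_pos two_pos _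
  refine ⟨2 ^ α / α + p * 2 ^ (p + α) / (1 - α), by positivity, fun t ht => ?_⟩
  have ht0 : (0 : ℝ) < t := by linarith
  have ht2 : (0 : ℝ) < t / 2 := by linarith
  have htt : t / 2 < t := by linarith
  set L : ℝ := p * (t / 2) ^ (-p - 1) with hL
  have hLnn : 0 ≤ L := mul_nonneg hp.le (Real.rpow_nonneg ht2.le _)
  -- basic facts about φ
  have hφcont : Continuous φ := by
    have hφeq : φ = fun s => (1 + max s 0) ^ (-p) := by
      funext s
      rw [hφ s]
      rcases lt_or_ge s 0 with h | h
      · rw [if_pos h, max_eq_right h.le, add_zero, Real.one_rpow]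
      · rw [if_neg (not_lt.mpr h), max_eq_left h]
    rw [hφeq]
    refine Continuous.rpow_const (continuous_const.add (continuous_id.max continuous_const))
      fun x => Or.inl ?_
    have h1 : (0 : ℝ) ≤ max x 0 := le_max_right _ _
    have h2 : (0 : ℝ) < 1 + max x 0 := by linarith
    exact ne_of_gt h2
  have hφ_nonneg : ∀ s, 0 ≤ φ s := by
    intro s; rw [hφ s]; split_ifs with h
    · norm_num
    · exact Real.rpow_nonneg (by linarith [not_lt.mp h]) _
  have hφ_le_one : ∀ s, φ s ≤ 1 := by
    intro s; rw [hφ s]; split_ifs with h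
    · exact le_rfl
    · exact Real.rpow_le_one_of_one_le_of_nonpos (by linarith [not_lt.mp h]) (by linarith)
  have hφt : φ t = (1 + t) ^ (-p) := by
    rw [hφ t, if_neg (not_lt.mpr (by linarith))]
  have hmono : ∀ s, s ≤ t → φ t ≤ φ s := by
    intro s hs
    rw [hφt, hφ s]
    split_ifs with h
    · exact Real.rpow_le_one_of_one_le_of_nonpos (by linarith) (by linarith)
    · exact Real.rpow_le_rpow_of_nonpos (by linarith [not_lt.mp h]) (by linarith) (by linarith)
  -- preimages under s ↦ t - s
  have hpre1 : (fun s : ℝ => t - s) ⁻¹' (Set.Ioi (t / 2)) = Set.Iio (t / 2) := by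
    ext x
    simp only [Set.mem_preimage, Set.mem_Ioi, Set.mem_Iio]
    constructor <;> intro <;> linarith
  have hpre2 : (fun s : ℝ => t - s) ⁻¹' (Set.Ioc 0 (t / 2)) = Set.Ico (t / 2) t := by
    ext x
    simp only [Set.mem_preimage, Set.mem_Ioc, Set.mem_Ico]
    constructor <;> (intro h; exact ⟨by linarith [h.1, h.2], by linarith [h.1, h.2]⟩)
  -- integrable majorants
  have M1 : IntegrableOn (fun s => (t - s) ^ (-1 - α)) (Set.Iio (t / 2)) volume := by
    rw [← hpre1]
    exact (sub_map_integrableOn_iff (fun x => x ^ (-1 - α)) t _).mpr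
      (integrableOn_Ioi_rpow_of_lt (by linarith) ht2)
  have M2 : IntegrableOn (fun s => (t - s) ^ (-α)) (Set.Ico (t / 2) t) volume := by
    rw [← hpre2]
    exact (sub_map_integrableOn_iff (fun x => x ^ (-α)) t _).mpr
      ((intervalIntegrable_iff_integrableOn_Ioc_of_le ht2.le).mp
        (intervalIntegral.intervalIntegrable_rpow' (by linarith)))
  -- the nonnegative integrand G
  set G : ℝ → ℝ := fun s => (φ s - φ t) * (t - s) ^ (-1 - α) with hG
  have hGcont : ContinuousOn G (Set.Iio t) := by
    refine ContinuousOn.mul ((hφcont.sub continuous_const).continuousOn) ?_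
    refine ContinuousOn.rpow_const ((continuous_const.sub continuous_id).continuousOn)
      fun x hx => Or.inl ?_
    have h1 : x < t := hx
    have h2 : (0 : ℝ) < t - x := by linarith
    exact ne_of_gt h2
  have hsub1 : Set.Iio (t / 2) ⊆ Set.Iio t := fun x hx => lt_trans hx htt
  have hsub2 : Set.Ico (t / 2) t ⊆ Set.Iio t := fun x hx => hx.2
  have hGnonneg : ∀ s ∈ Set.Iio t, 0 ≤ G s := by
    intro s hs
    exact mul_nonneg (by linarith [hmono s (le_of_lt hs)])
      (Real.rpow_nonneg (by linarith [Set.mem_Iio.mp hs]) _)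
  have hbound1 : ∀ s ∈ Set.Iio (t / 2), G s ≤ (t - s) ^ (-1 - α) := by
    intro s hs
    have h1 : φ s - φ t ≤ 1 := by linarith [hφ_le_one s, hφ_nonneg t]
    have h2 : (0 : ℝ) ≤ (t - s) ^ (-1 - α) :=
      Real.rpow_nonneg (by linarith [Set.mem_Iio.mp hs]) _
    calc G s ≤ 1 * (t - s) ^ (-1 - α) := mul_le_mul_of_nonneg_right h1 h2
      _ = (t - s) ^ (-1 - α) := one_mul _
  have hbound2 : ∀ s ∈ Set.Ico (t / 2) t, G s ≤ L * (t - s) ^ (-α) := by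
    intro s hs
    obtain ⟨hs1, hs2⟩ := hs
    have hs0 : (0 : ℝ) ≤ s := by linarith
    have hφs : φ s = (1 + s) ^ (-p) := by rw [hφ s, if_neg (not_lt.mpr hs0)]
    have key : φ s - φ t ≤ L * (t - s) := by
      have h1 := rpow_neg_sub_le p hp (a := 1 + s) (b := 1 + t) (by linarith) (by linarith)
      rw [show (1 + t) - (1 + s) = t - s by ring] at h1
      have h2 : (1 + s) ^ (-p - 1) ≤ (t / 2) ^ (-p - 1) :=
        Real.rpow_le_rpow_of_nonpos ht2 (by linarith) (by linarith)
      have h3 := mul_le_mul_of_nonneg_right (mul_le_mul_of_nonneg_left h2 hp.le)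
        (show (0 : ℝ) ≤ t - s by linarith)
      rw [hφt, hφs, hL]
      linarith
    have hpow : (t - s) * (t - s) ^ (-1 - α) = (t - s) ^ (-α) := by
      have h3 := Real.rpow_add (show (0 : ℝ) < t - s by linarith) 1 (-1 - α)
      rw [show (1 : ℝ) + (-1 - α) = -α by ring] at h3
      rw [h3, Real.rpow_one]
    have h4 : (0 : ℝ) ≤ (t - s) ^ (-1 - α) := Real.rpow_nonneg (by linarith) _
    calc G s = (φ s - φ t) * (t - s) ^ (-1 - α) := rfl
      _ ≤ (L * (t - s)) * (t - s) ^ (-1 - α) := mul_le_mul_of_nonneg_right key h4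
      _ = L * ((t - s) * (t - s) ^ (-1 - α)) := by ring
      _ = L * (t - s) ^ (-α) := by rw [hpow]
  -- integrability of G on the two pieces
  have hGint1 : IntegrableOn G (Set.Iio (t / 2)) volume := by
    refine Integrable.mono M1 ((hGcont.mono hsub1).aestronglyMeasurable measurableSet_Iio) ?_
    refine (ae_restrict_iff' measurableSet_Iio).mpr (ae_of_all _ fun s hs => ?_)
    have h0 := hGnonneg s (hsub1 hs)
    have h2 : (0 : ℝ) ≤ (t - s) ^ (-1 - α) :=
      Real.rpow_nonneg (by linarith [Set.mem_Iio.mp hs]) _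
    rw [Real.norm_eq_abs, Real.norm_eq_abs, abs_of_nonneg h0, abs_of_nonneg h2]
    exact hbound1 s hs
  have hGint2 : IntegrableOn G (Set.Ico (t / 2) t) volume := by
    refine Integrable.mono (M2.const_mul L)
      ((hGcont.mono hsub2).aestronglyMeasurable measurableSet_Ico) ?_
    refine (ae_restrict_iff' measurableSet_Ico).mpr (ae_of_all _ fun s hs => ?_)
    have h0 := hGnonneg s (hsub2 hs)
    have h2 : (0 : ℝ) ≤ L * (t - s) ^ (-α) :=
      mul_nonneg hLnn (Real.rpow_nonneg (by linarith [hs.2]) _)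
    rw [Real.norm_eq_abs, Real.norm_eq_abs, abs_of_nonneg h0, abs_of_nonneg h2]
    exact hbound2 s hs
  have hsplit : Set.Iio (t / 2) ∪ Set.Ico (t / 2) t = Set.Iio t :=
    Set.Iio_union_Ico_eq_Iio htt.le
  have hGint : IntegrableOn G (Set.Iio t) volume := by
    rw [← hsplit]; exact hGint1.union hGint2
  have hneg : (fun s => (φ t - φ s) * (t - s) ^ (-1 - α)) = fun s => -G s := by
    funext s; simp only [hG]; ring
  have hInt : IntegrableOn (fun s => (φ t - φ s) * (t - s) ^ (-1 - α)) (Set.Iio t) volume := by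
    rw [hneg]; exact hGint.neg
  have hIeq : (∫ s in Set.Iio t, (φ t - φ s) * (t - s) ^ (-1 - α)) = -∫ s in Set.Iio t, G s := by
    rw [hneg, integral_neg]
  -- value of majorant integrals
  have E1 : (∫ s in Set.Iio (t / 2), (t - s) ^ (-1 - α)) = (t / 2) ^ (-α) / α := by
    rw [← hpre1, sub_map_integral (fun x => x ^ (-1 - α)) t]
    have h := integral_Ioi_rpow_of_lt (a := -1 - α) (by linarith) ht2
    rw [show -1 - α + 1 = -α by ring] at h
    rw [h, neg_div_neg_eq]
  have E2 : (∫ s in Set.Ico (t / 2) t, (t - s) ^ (-α)) = (t / 2) ^ (1 - α) / (1 - α) := by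
    rw [← hpre2, sub_map_integral (fun x => x ^ (-α)) t,
      ← intervalIntegral.integral_of_le ht2.le,
      integral_rpow (Or.inl (by linarith)),
      Real.zero_rpow (show -α + 1 ≠ 0 by intro h; linarith),
      show -α + 1 = 1 - α by ring, sub_zero]
  -- combine
  have hdisj : Disjoint (Set.Iio (t / 2)) (Set.Ico (t / 2) t) :=
    (Set.Iio_disjoint_Ici le_rfl).mono_right Set.Ico_subset_Ici_self
  have hsum : (∫ s in Set.Iio t, G s)
      = (∫ s in Set.Iio (t / 2), G s) + ∫ s in Set.Ico (t / 2) t, G s := by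
    rw [← hsplit, setIntegral_union hdisj measurableSet_Ico hGint1 hGint2]
  have hJ1 : (∫ s in Set.Iio (t / 2), G s) ≤ (t / 2) ^ (-α) / α := by
    rw [← E1]
    exact setIntegral_mono_on hGint1 M1 measurableSet_Iio hbound1
  have hJ2 : (∫ s in Set.Ico (t / 2) t, G s) ≤ L * ((t / 2) ^ (1 - α) / (1 - α)) := by
    have h := setIntegral_mono_on hGint2 (M2.const_mul L) measurableSet_Ico hbound2
    rwa [integral_const_mul, E2] at h
  -- rpow arithmetic
  have hdiv : ∀ q : ℝ, (t / 2 : ℝ) ^ q = t ^ q * 2 ^ (-q) := by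
    intro q
    rw [Real.div_rpow ht0.le (by norm_num), Real.rpow_neg (by norm_num), div_eq_mul_inv]
  have hA : (t / 2 : ℝ) ^ (-α) = t ^ (-α) * 2 ^ α := by rw [hdiv, neg_neg]
  have hB : (t / 2 : ℝ) ^ (-p - 1) * (t / 2) ^ (1 - α) = (t / 2) ^ (-p - α) := by
    rw [← Real.rpow_add ht2, show (-p - 1) + (1 - α) = -p - α by ring]
  have hC : (t / 2 : ℝ) ^ (-p - α) = t ^ (-p - α) * 2 ^ (p + α) := by
    rw [hdiv, show -(-p - α) = p + α by ring]
  have hD : t ^ (-p - α) ≤ t ^ (-α) :=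
    Real.rpow_le_rpow_of_exponent_le ht.le (by linarith)
  have htα : (0 : ℝ) < t ^ (-α) := Real.rpow_pos_of_pos ht0 _
  have hfinal : (t / 2) ^ (-α) / α + L * ((t / 2) ^ (1 - α) / (1 - α))
      ≤ (2 ^ α / α + p * 2 ^ (p + α) / (1 - α)) * t ^ (-α) := by
    have hLB : L * ((t / 2) ^ (1 - α) / (1 - α)) = p * (t ^ (-p - α) * 2 ^ (p + α)) / (1 - α) := by
      rw [hL]
      calc p * (t / 2) ^ (-p - 1) * ((t / 2) ^ (1 - α) / (1 - α))
          = p * ((t / 2) ^ (-p - 1) * (t / 2) ^ (1 - α)) / (1 - α) := by ring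
        _ = p * (t / 2) ^ (-p - α) / (1 - α) := by rw [hB]
        _ = p * (t ^ (-p - α) * 2 ^ (p + α)) / (1 - α) := by rw [hC]
    rw [hA, hLB, show (2 ^ α / α + p * 2 ^ (p + α) / (1 - α)) * t ^ (-α)
      = t ^ (-α) * 2 ^ α / α + p * (t ^ (-α) * 2 ^ (p + α)) / (1 - α) by ring]
    have hstep : p * (t ^ (-p - α) * 2 ^ (p + α)) / (1 - α)
        ≤ p * (t ^ (-α) * 2 ^ (p + α)) / (1 - α) := by
      gcongr
    linarith
  have hGle : (∫ s in Set.Iio t, G s) ≤ (2 ^ α / α + p * 2 ^ (p + α) / (1 - α)) * t ^ (-α) := by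
    rw [hsum]; linarith
  have hGnn : 0 ≤ ∫ s in Set.Iio t, G s :=
    setIntegral_nonneg measurableSet_Iio hGnonneg
  refine ⟨hInt, ?_, ?_⟩
  · rw [hIeq]; linarith
  · rw [hIeq]; linarith
end

section
/- Let 0 < α < 1. For every r > 0, the integral ∫_{−r/2}^{r/2} (r^α − (r + y)^α) |y|^{−1−α} dy converges, is independent of r, and equals the strictly positive constant c_α := ∫_{−1/2}^{1/2} (1 − (1 + z)^α) |z|^{−1−α} dz ∈ (0, ∞). In particular there is a constant c > 0 depending only on α such that ∫_{−r/2}^{r/2} (r^α − (r + y)^α) |y|^{−1−α} dy ≥ c for all r > 0. -/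
/-!
The integrand is homogeneous of degree `-1` in `(r, y)`, so the substitution `y = r z` turns the
integral over `[-r/2, r/2]` into the one over `[-1/2, 1/2]`. Since `t ↦ (1 + t) ^ α` is
`1`-Lipschitz on `[-1, ∞)` for `α ≤ 1`, the integrand is `O(|z| ^ (-α))` near `0`, hence
integrable. Pairing `z` with `-z` gives `(2 - (1 - z) ^ α - (1 + z) ^ α) |z| ^ (-1 - α)`, which is
positive by strict concavity of `t ↦ t ^ α`.
-/

open MeasureTheory Set

theorem IntervalIntegrable.comp_neg_add_self {E : Type*} [NormedAddCommGroup E] {f : ℝ → E}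
    {a : ℝ} (h₁ : IntervalIntegrable f volume (-a) 0) (h₂ : IntervalIntegrable f volume 0 a) :
    IntervalIntegrable (fun x => f (-x) + f x) volume 0 a := by
  have hneg := ((IntervalIntegrable.iff_comp_neg).mp h₁).symm
  rw [neg_zero, neg_neg] at hneg
  exact hneg.add h₂

theorem intervalIntegral.integral_neg_eq_integral_comp_neg_add_self {E : Type*}
    [NormedAddCommGroup E] [NormedSpace ℝ E] {f : ℝ → E} {a : ℝ}
    (h₁ : IntervalIntegrable f volume (-a) 0) (h₂ : IntervalIntegrable f volume 0 a) :
    ∫ x in -a..a, f x = ∫ x in 0..a, (f (-x) + f x) := by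
  have hneg := ((IntervalIntegrable.iff_comp_neg).mp h₁).symm
  rw [neg_zero, neg_neg] at hneg
  rw [← integral_add_adjacent_intervals h₁ h₂, integral_add hneg h₂, integral_comp_neg, neg_zero]

theorem intervalIntegrable_abs_rpow {r : ℝ} (hr : -1 < r) (a b : ℝ) :
    IntervalIntegrable (fun x : ℝ => |x| ^ r) volume a b := by
  have hnonneg : ∀ c, 0 ≤ c → IntervalIntegrable (fun x : ℝ => |x| ^ r) volume 0 c := by
    intro c hc
    refine (intervalIntegrable_congr fun x hx => ?_).mp
      (intervalIntegral.intervalIntegrable_rpow' hr)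
    rw [uIoc_of_le hc] at hx
    simp only [abs_of_pos hx.1]
  have hall : ∀ c, IntervalIntegrable (fun x : ℝ => |x| ^ r) volume 0 c := by
    intro c
    rcases le_total 0 c with hc | hc
    · exact hnonneg c hc
    · simpa using (IntervalIntegrable.iff_comp_neg).mp (hnonneg (-c) (by linarith))
  exact (hall a).symm.trans (hall b)

namespace Real

theorem abs_one_add_rpow_sub_one_le {α x : ℝ} (hα0 : 0 ≤ α) (hα1 : α ≤ 1) (hx : -1 ≤ x) :
    |(1 + x) ^ α - 1| ≤ |x| := by
  rcases le_total 0 x with hx0 | hx0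
  · have hlow : 1 ≤ (1 + x) ^ α := one_le_rpow (by linarith) hα0
    have hup := rpow_one_add_le_one_add_mul_self hx hα0 hα1
    rw [abs_of_nonneg (by linarith), abs_of_nonneg hx0]
    nlinarith
  · have hup : (1 + x) ^ α ≤ 1 := rpow_le_one (by linarith) (by linarith) hα0
    have hlow : 1 + x ≤ (1 + x) ^ α := self_le_rpow_of_le_one (by linarith) (by linarith) hα1
    rw [abs_of_nonpos (by linarith), abs_of_nonpos hx0]
    linarith

theorem one_sub_rpow_add_one_add_rpow_lt_two {α x : ℝ} (hα0 : 0 < α) (hα1 : α < 1)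
    (hx0 : 0 < x) (hx1 : x ≤ 1) : (1 - x) ^ α + (1 + x) ^ α < 2 := by
  have h := (strictConcaveOn_rpow hα0 hα1).2 (mem_Ici.mpr (by linarith : (0:ℝ) ≤ 1 - x))
    (mem_Ici.mpr (by linarith : (0:ℝ) ≤ 1 + x)) (by linarith) (by norm_num : (0:ℝ) < 1/2)
    (by norm_num : (0:ℝ) < 1/2) (by norm_num)
  simp only [smul_eq_mul] at h
  rw [show (1/2:ℝ) * (1 - x) + 1/2 * (1 + x) = 1 by ring, one_rpow] at h
  linarith

end Real

section Kernel

variable {α : ℝ}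

theorem abs_one_sub_one_add_rpow_mul_abs_rpow_le (hα0 : 0 ≤ α) (hα1 : α ≤ 1) {z : ℝ}
    (hz : -1 ≤ z) : |(1 - (1 + z) ^ α) * |z| ^ (-1 - α)| ≤ |z| ^ (-α) := by
  rcases eq_or_ne z 0 with rfl | hz0
  · simpa using Real.rpow_nonneg le_rfl _
  calc |(1 - (1 + z) ^ α) * |z| ^ (-1 - α)| = |(1 + z) ^ α - 1| * |z| ^ (-1 - α) := by
        rw [abs_mul, abs_sub_comm, abs_of_nonneg (Real.rpow_nonneg (abs_nonneg z) _)]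
    _ ≤ |z| * |z| ^ (-1 - α) := mul_le_mul_of_nonneg_right
        (Real.abs_one_add_rpow_sub_one_le hα0 hα1 hz) (Real.rpow_nonneg (abs_nonneg z) _)
    _ = |z| ^ (-α) := by
        rw [mul_comm, ← Real.rpow_add_one (abs_ne_zero.mpr hz0)]
        ring_nf

theorem intervalIntegrable_one_sub_one_add_rpow_mul_abs_rpow (hα0 : 0 ≤ α) (hα1 : α < 1)
    {a b : ℝ} (ha : -1 ≤ a) (hb : -1 ≤ b) :
    IntervalIntegrable (fun z => (1 - (1 + z) ^ α) * |z| ^ (-1 - α)) volume a b := by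
  refine (intervalIntegrable_abs_rpow (neg_lt_neg hα1) a b).mono_fun (by fun_prop)
    (ae_restrict_of_forall_mem measurableSet_uIoc fun z hz => ?_)
  have hz : -1 ≤ z := (le_min ha hb).trans (uIoc_subset_uIcc hz).1
  simpa only [Real.norm_eq_abs, abs_abs, abs_of_nonneg (Real.rpow_nonneg (abs_nonneg z) _)]
    using abs_one_sub_one_add_rpow_mul_abs_rpow_le hα0 hα1.le hz

theorem rpow_sub_rpow_mul_abs_rpow_eq {r y : ℝ} (hr : 0 < r) (hy : -r ≤ y) :
    (r ^ α - (r + y) ^ α) * |y| ^ (-1 - α)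
      = r⁻¹ * ((1 - (1 + y / r) ^ α) * |y / r| ^ (-1 - α)) := by
  have hz : 0 ≤ 1 + y / r := by
    rw [← neg_le_iff_add_nonneg', le_div_iff₀ hr]; linarith
  have hpow : r ^ α * r ^ (-1 - α) = r⁻¹ := by
    rw [← Real.rpow_add hr, add_sub_cancel, Real.rpow_neg_one]
  rw [show r + y = r * (1 + y / r) by field_simp, show |y| = r * |y / r| by
      rw [abs_div, abs_of_pos hr]; field_simp,
    Real.mul_rpow hr.le hz, Real.mul_rpow hr.le (abs_nonneg _)]
  linear_combination (1 - (1 + y / r) ^ α) * |y / r| ^ (-1 - α) * hpow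

theorem intervalIntegrable_rpow_sub_rpow_mul_abs_rpow (hα0 : 0 ≤ α) (hα1 : α < 1) {r a b : ℝ}
    (hr : 0 < r) (ha : -r ≤ a) (hb : -r ≤ b) :
    IntervalIntegrable (fun y => (r ^ α - (r + y) ^ α) * |y| ^ (-1 - α)) volume a b := by
  have hscaled := ((intervalIntegrable_one_sub_one_add_rpow_mul_abs_rpow hα0 hα1
    (a := a / r) (b := b / r) ?_ ?_).comp_mul_left (c := r⁻¹)).const_mul r⁻¹
  · rw [div_inv_eq_mul, div_inv_eq_mul, div_mul_cancel₀ _ hr.ne', div_mul_cancel₀ _ hr.ne']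
      at hscaled
    refine (intervalIntegrable_congr fun y hy => ?_).mpr hscaled
    rw [rpow_sub_rpow_mul_abs_rpow_eq hr ((le_min ha hb).trans (uIoc_subset_uIcc hy).1),
      inv_mul_eq_div r y]
  all_goals rw [le_div_iff₀ hr]; linarith

theorem integral_rpow_sub_rpow_mul_abs_rpow {r a b : ℝ} (hr : 0 < r) (ha : -r ≤ a)
    (hb : -r ≤ b) :
    ∫ y in a..b, (r ^ α - (r + y) ^ α) * |y| ^ (-1 - α)
      = ∫ z in a / r..b / r, (1 - (1 + z) ^ α) * |z| ^ (-1 - α) := by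
  rw [intervalIntegral.integral_congr fun y hy => rpow_sub_rpow_mul_abs_rpow_eq hr
      ((le_min ha hb).trans hy.1), intervalIntegral.integral_const_mul,
    intervalIntegral.integral_comp_div (fun z => (1 - (1 + z) ^ α) * |z| ^ (-1 - α)) hr.ne',
    smul_eq_mul, inv_mul_cancel_left₀ hr.ne']

theorem integral_one_sub_one_add_rpow_mul_abs_rpow_pos (hα0 : 0 < α) (hα1 : α < 1) {a : ℝ}
    (ha0 : 0 < a) (ha1 : a ≤ 1) :
    0 < ∫ z in -a..a, (1 - (1 + z) ^ α) * |z| ^ (-1 - α) := by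
  have hint {b c : ℝ} (hb : -1 ≤ b) (hc : -1 ≤ c) :=
    intervalIntegrable_one_sub_one_add_rpow_mul_abs_rpow hα0.le hα1 hb hc
  have h₁ := hint (neg_le_neg ha1) (by norm_num : (-1 : ℝ) ≤ 0)
  have h₂ := hint (by norm_num : (-1 : ℝ) ≤ 0) (by linarith)
  rw [intervalIntegral.integral_neg_eq_integral_comp_neg_add_self h₁ h₂]
  refine intervalIntegral.intervalIntegral_pos_of_pos_on (h₁.comp_neg_add_self h₂)
    (fun x hx => ?_) ha0
  have hsum : (1 - (1 + -x) ^ α) * |-x| ^ (-1 - α) + (1 - (1 + x) ^ α) * |x| ^ (-1 - α)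
      = (2 - ((1 - x) ^ α + (1 + x) ^ α)) * |x| ^ (-1 - α) := by
    rw [abs_neg, ← sub_eq_add_neg]; ring
  rw [hsum]
  exact mul_pos
    (sub_pos.mpr (Real.one_sub_rpow_add_one_add_rpow_lt_two hα0 hα1 hx.1 (by linarith [hx.2])))
    (Real.rpow_pos_of_pos (abs_pos.mpr hx.1.ne') _)

end Kernel

/-- For `0 < α < 1` and every `r > 0`, the integral
`∫_{-r/2}^{r/2} (r^α - (r+y)^α) |y|^{-1-α} dy` converges, is independent of `r`, and equals
the strictly positive constant `c_α = ∫_{-1/2}^{1/2} (1 - (1+z)^α) |z|^{-1-α} dz`.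
In particular there is `c > 0` with the integral `≥ c` for all `r > 0`. -/
theorem stmt_12 (α : ℝ) (hα0 : 0 < α) (hα1 : α < 1) :
    IntervalIntegrable (fun z => (1 - (1 + z) ^ α) * |z| ^ (-1 - α)) volume
      (-(1:ℝ)/2) (1/2) ∧
    0 < (∫ z in (-(1:ℝ)/2)..(1/2), (1 - (1 + z) ^ α) * |z| ^ (-1 - α)) ∧
    (∀ r : ℝ, 0 < r →
      IntervalIntegrable (fun y => (r ^ α - (r + y) ^ α) * |y| ^ (-1 - α)) volume
        (-r/2) (r/2) ∧
      (∫ y in (-r/2)..(r/2), (r ^ α - (r + y) ^ α) * |y| ^ (-1 - α))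
        = ∫ z in (-(1:ℝ)/2)..(1/2), (1 - (1 + z) ^ α) * |z| ^ (-1 - α)) ∧
    (∃ c : ℝ, 0 < c ∧ ∀ r : ℝ, 0 < r →
      c ≤ ∫ y in (-r/2)..(r/2), (r ^ α - (r + y) ^ α) * |y| ^ (-1 - α)) := by
  have hpos : 0 < ∫ z in (-(1:ℝ)/2)..(1/2), (1 - (1 + z) ^ α) * |z| ^ (-1 - α) := by
    rw [neg_div]
    exact integral_one_sub_one_add_rpow_mul_abs_rpow_pos hα0 hα1 (by norm_num) (by norm_num)
  have hscale (r : ℝ) (hr : 0 < r) :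
      IntervalIntegrable (fun y => (r ^ α - (r + y) ^ α) * |y| ^ (-1 - α)) volume
        (-r/2) (r/2) ∧
      (∫ y in (-r/2)..(r/2), (r ^ α - (r + y) ^ α) * |y| ^ (-1 - α))
        = ∫ z in (-(1:ℝ)/2)..(1/2), (1 - (1 + z) ^ α) * |z| ^ (-1 - α) := by
    have hlo : -r ≤ -r / 2 := by linarith
    have hhi : -r ≤ r / 2 := by linarith
    refine ⟨intervalIntegrable_rpow_sub_rpow_mul_abs_rpow hα0.le hα1 hr hlo hhi, ?_⟩
    rw [integral_rpow_sub_rpow_mul_abs_rpow hr hlo hhi]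
    congr 1 <;> field_simp
  exact ⟨intervalIntegrable_one_sub_one_add_rpow_mul_abs_rpow hα0.le hα1 (by norm_num)
    (by norm_num), hpos, hscale, _, hpos, fun r hr => (hscale r hr).2.ge⟩
end

section
/- Let N ≥ 1, m > 1, c > 1 and A > 0, and let H : ℝ^N × ℝ^N → ℝ be continuous and ℤ^N-periodic in its first variable (H(x + k, p) = H(x, p) for all k ∈ ℤ^N). Assume that for every μ ∈ (0,1) and all x, p ∈ ℝ^N, μ H(x, μ^{−1} p) − H(x, p) ≥ (1 − μ)(c^{−1} |p|^m − A). Then there exists a constant C > 0 such that H(x, p) ≥ C^{−1} |p|^m − C for all x, p ∈ ℝ^N. -/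
open MeasureTheory Filter

set_option maxHeartbeats 1600000 in
/-- Let `H : ℝ^N × ℝ^N → ℝ` be continuous, `ℤ^N`-periodic in `x`, satisfying
the superlinear growth condition `μ H(x, μ⁻¹ p) - H(x,p) ≥ (1-μ)(c⁻¹ |p|^m - A)` for all
`μ ∈ (0,1)`. Then there is `C > 0` with `H(x,p) ≥ C⁻¹ |p|^m - C` for all `x, p`. -/
theorem stmt_13 (N : ℕ) (hN : 1 ≤ N) (m c A : ℝ) (hm : 1 < m) (hc : 1 < c) (hA : 0 < A)
    (H : EuclideanSpace ℝ (Fin N) → EuclideanSpace ℝ (Fin N) → ℝ)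
    (hcont : Continuous fun q : EuclideanSpace ℝ (Fin N) × EuclideanSpace ℝ (Fin N) =>
      H q.1 q.2)
    (hper : ∀ (x p : EuclideanSpace ℝ (Fin N)) (k : Fin N → ℤ),
      H (x + (WithLp.equiv 2 (Fin N → ℝ)).symm fun i => (k i : ℝ)) p = H x p)
    (hgrowth : ∀ μ ∈ Set.Ioo (0:ℝ) 1, ∀ x p : EuclideanSpace ℝ (Fin N),
      μ * H x (μ⁻¹ • p) - H x p ≥ (1 - μ) * (c⁻¹ * ‖p‖ ^ m - A)) :
    ∃ C : ℝ, 0 < C ∧ ∀ x p : EuclideanSpace ℝ (Fin N),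
      H x p ≥ C⁻¹ * ‖p‖ ^ m - C := by
  classical
  -- periodic reduction
  have hred : ∀ x : EuclideanSpace ℝ (Fin N), ∃ y : EuclideanSpace ℝ (Fin N),
      ‖y‖ ≤ Real.sqrt N ∧ ∀ p, H x p = H y p := by
    intro x
    set v : EuclideanSpace ℝ (Fin N) :=
      (WithLp.equiv 2 (Fin N → ℝ)).symm (fun i => ((⌊x i⌋ : ℤ) : ℝ)) with hv
    refine ⟨x - v, ?_, ?_⟩
    · rw [EuclideanSpace.norm_eq]
      apply Real.sqrt_le_sqrt
      have : ∀ i, ‖(x - v) i‖ ^ 2 ≤ 1 := by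
        intro i
        have hvi : v i = ((⌊x i⌋ : ℤ) : ℝ) := rfl
        have : (x - v) i = x i - ⌊x i⌋ := by
          simp [hvi]
        rw [this]
        have h1 : (0:ℝ) ≤ x i - ⌊x i⌋ := by
          have := Int.floor_le (x i); linarith
        have h2 : x i - ⌊x i⌋ < 1 := by
          have := Int.lt_floor_add_one (x i); linarith
        rw [Real.norm_eq_abs, abs_of_nonneg h1]
        nlinarith
      calc ∑ i, ‖(x - v) i‖ ^ 2 ≤ ∑ _i : Fin N, (1:ℝ) :=
            Finset.sum_le_sum fun i _ => this i
        _ = N := by simp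
    · intro p
      have := hper (x - v) p (fun i => ⌊x i⌋)
      rw [hv] at this ⊢
      simpa using this
  -- bound on compact set
  obtain ⟨M, hM⟩ : ∃ M, ∀ x p : EuclideanSpace ℝ (Fin N),
      ‖x‖ ≤ Real.sqrt N → ‖p‖ ≤ 1 → -M ≤ H x p := by
    have hK : IsCompact ((Metric.closedBall (0:EuclideanSpace ℝ (Fin N)) (Real.sqrt N)) ×ˢ
        Metric.closedBall (0:EuclideanSpace ℝ (Fin N)) 1) :=
      (isCompact_closedBall _ _).prod (isCompact_closedBall _ _)
    obtain ⟨M, hM⟩ := (hK.bddAbove_image ((hcont.neg).continuousOn))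
    refine ⟨M, fun x p hx hp => ?_⟩
    have hmem : (x, p) ∈ (Metric.closedBall (0:EuclideanSpace ℝ (Fin N)) (Real.sqrt N)) ×ˢ
        Metric.closedBall (0:EuclideanSpace ℝ (Fin N)) 1 := by
      constructor <;> simp [Metric.mem_closedBall, dist_zero_right, hx, hp]
    have : -H x p ≤ M := hM ⟨(x, p), hmem, rfl⟩
    linarith
  -- constants
  have h2 : (0:ℝ) < 2 := by norm_num
  have hcinv : (0:ℝ) < c⁻¹ := by positivity
  have hD : (0:ℝ) < c⁻¹ * (2:ℝ) ^ (-m) := by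
    have := Real.rpow_pos_of_pos h2 (-m); positivity
  set D : ℝ := c⁻¹ * (2:ℝ) ^ (-m) with hDdef
  have h2m : (0:ℝ) < 1 - (2:ℝ) ^ (1 - m) := by
    have : (2:ℝ) ^ (1 - m) < 1 :=
      Real.rpow_lt_one_of_one_lt_of_neg one_lt_two (by linarith)
    linarith
  set s : ℝ := (1 + m) / 2 with hsdef
  have hs1 : 1 < s := by rw [hsdef]; linarith
  have hsm : s < m := by rw [hsdef]; linarith
  have h2s : (0:ℝ) < 1 - (2:ℝ) ^ (1 - s) := by
    have : (2:ℝ) ^ (1 - s) < 1 :=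
      Real.rpow_lt_one_of_one_lt_of_neg one_lt_two (by linarith)
    linarith
  set a : ℝ := D / (1 - (2:ℝ) ^ (1 - m)) with hadef
  have ha : 0 < a := div_pos hD h2m
  have haeq : a * (1 - (2:ℝ) ^ (1 - m)) = D := div_mul_cancel₀ _ (ne_of_gt h2m)
  set M₀ : ℝ := max M 0 with hM₀def
  set b₀ : ℝ := M₀ + a + 1 with hb₀def
  have hb₀ : 0 < b₀ := by
    have : (0:ℝ) ≤ M₀ := le_max_right _ _
    rw [hb₀def]; linarith
  set b : ℝ := (b₀ + A) / (1 - (2:ℝ) ^ (1 - s)) with hbdef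
  have hb : 0 < b := div_pos (by linarith) h2s
  have hbeq : b * (1 - (2:ℝ) ^ (1 - s)) = b₀ + A := div_mul_cancel₀ _ (ne_of_gt h2s)
  -- the step inequality
  have step : ∀ x p : EuclideanSpace ℝ (Fin N),
      H x p ≥ 2 * H x ((2⁻¹:ℝ) • p) + D * ‖p‖ ^ m - A := by
    intro x p
    have h := hgrowth 2⁻¹ ⟨by norm_num, by norm_num⟩ x ((2⁻¹:ℝ) • p)
    have e1 : ((2⁻¹:ℝ))⁻¹ • ((2⁻¹:ℝ) • p) = p := by
      rw [smul_smul]; norm_num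
    have e2 : ‖(2⁻¹:ℝ) • p‖ = 2⁻¹ * ‖p‖ := by
      rw [norm_smul]; norm_num
    rw [e1, e2] at h
    have e3 : (2⁻¹ * ‖p‖) ^ m = (2:ℝ) ^ (-m) * ‖p‖ ^ m := by
      rw [Real.mul_rpow (by norm_num) (norm_nonneg p),
        ← Real.rpow_neg_one (2:ℝ), ← Real.rpow_mul (by norm_num)]
      ring_nf
    rw [e3] at h
    rw [hDdef]
    linarith
  -- norm powers of half
  have half_pow : ∀ (t : ℝ) (p : EuclideanSpace ℝ (Fin N)),
      ‖(2⁻¹:ℝ) • p‖ ^ t = (2:ℝ) ^ (-t) * ‖p‖ ^ t := by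
    intro t p
    have e2 : ‖(2⁻¹:ℝ) • p‖ = 2⁻¹ * ‖p‖ := by rw [norm_smul]; norm_num
    rw [e2, Real.mul_rpow (by norm_num) (norm_nonneg p),
      ← Real.rpow_neg_one (2:ℝ), ← Real.rpow_mul (by norm_num)]
    ring_nf
  -- main induction
  have key : ∀ n : ℕ, ∀ x p : EuclideanSpace ℝ (Fin N), ‖p‖ ≤ 2 ^ n →
      H x p ≥ a * ‖p‖ ^ m - b * ‖p‖ ^ s - b₀ := by
    intro n
    induction n with
    | zero =>
      intro x p hp
      rw [pow_zero] at hp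
      have h1 : ‖p‖ ^ m ≤ 1 :=
        Real.rpow_le_one (norm_nonneg p) hp (by linarith)
      have h2' : 0 ≤ b * ‖p‖ ^ s :=
        mul_nonneg hb.le (Real.rpow_nonneg (norm_nonneg p) _)
      obtain ⟨y, hy, hxy⟩ := hred x
      have hHb : -M₀ ≤ H x p := by
        rw [hxy p]
        have h3 := hM y p hy hp
        have : M ≤ M₀ := le_max_left _ _
        linarith
      have h4 : a * ‖p‖ ^ m ≤ a := by nlinarith
      rw [hb₀def]; linarith
    | succ n ih =>
      intro x p hp
      by_cases hle : ‖p‖ ≤ 2 ^ n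
      · exact ih x p hle
      push_neg at hle
      have h1p : (1:ℝ) ≤ ‖p‖ := le_trans (one_le_pow₀ one_le_two) hle.le
      have hp2 : ‖(2⁻¹:ℝ) • p‖ ≤ 2 ^ n := by
        have e2 : ‖(2⁻¹:ℝ) • p‖ = 2⁻¹ * ‖p‖ := by rw [norm_smul]; norm_num
        rw [e2]
        rw [pow_succ] at hp
        linarith
      have hih := ih x ((2⁻¹:ℝ) • p) hp2
      have hst := step x p
      rw [half_pow m, half_pow s] at hih
      -- coefficient identities
      have c1 : (2:ℝ) ^ (1 - m) = 2 * (2:ℝ) ^ (-m) := by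
        rw [show (1:ℝ) - m = 1 + (-m) by ring, Real.rpow_add h2, Real.rpow_one]
      have c2 : (2:ℝ) ^ (1 - s) = 2 * (2:ℝ) ^ (-s) := by
        rw [show (1:ℝ) - s = 1 + (-s) by ring, Real.rpow_add h2, Real.rpow_one]
      have hps1 : (1:ℝ) ≤ ‖p‖ ^ s :=
        Real.one_le_rpow h1p (by linarith)
      -- combine
      have ht : a - D = 2 * (a * (2:ℝ) ^ (-m)) := by
        have h := haeq
        rw [c1] at h
        linarith [h]
      have ht' : (a - D) * ‖p‖ ^ m = 2 * (a * ((2:ℝ) ^ (-m) * ‖p‖ ^ m)) := by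
        rw [ht]; ring
      have hc2' : 2 * (b * ((2:ℝ) ^ (-s) * ‖p‖ ^ s)) = (2:ℝ) ^ (1 - s) * (b * ‖p‖ ^ s) := by
        rw [c2]; ring
      have hbY : b₀ + A ≤ b * ‖p‖ ^ s - (2:ℝ) ^ (1 - s) * (b * ‖p‖ ^ s) := by
        have h := mul_le_mul_of_nonneg_left hps1 (le_of_lt (mul_pos hb h2s))
        rw [mul_one] at h
        calc b₀ + A = b * (1 - (2:ℝ) ^ (1 - s)) := hbeq.symm
          _ ≤ b * (1 - (2:ℝ) ^ (1 - s)) * ‖p‖ ^ s := by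
              have h' := mul_le_mul_of_nonneg_left hps1 (le_of_lt (mul_pos hb h2s))
              calc b * (1 - (2:ℝ) ^ (1 - s)) = b * (1 - (2:ℝ) ^ (1 - s)) * 1 := by ring
                _ ≤ b * (1 - (2:ℝ) ^ (1 - s)) * ‖p‖ ^ s :=
                    mul_le_mul_of_nonneg_left hps1 (le_of_lt (mul_pos hb h2s)) |>.trans_eq (by ring)
          _ = b * ‖p‖ ^ s - (2:ℝ) ^ (1 - s) * (b * ‖p‖ ^ s) := by ring
      linarith [hst, hih, ht', hc2', hbY]
  -- get rid of the s-term
  set T : ℝ := max 1 ((2 * b / a) ^ ((m - s)⁻¹)) with hTdef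
  have hT1 : (1:ℝ) ≤ T := le_max_left _ _
  have hTs : 0 ≤ b * T ^ s := mul_nonneg hb.le (Real.rpow_nonneg (by linarith) _)
  have hbound : ∀ p : EuclideanSpace ℝ (Fin N),
      b * ‖p‖ ^ s ≤ a / 2 * ‖p‖ ^ m + b * T ^ s := by
    intro p
    by_cases hpT : ‖p‖ ≤ T
    · have h1 : ‖p‖ ^ s ≤ T ^ s :=
        Real.rpow_le_rpow (norm_nonneg p) hpT (by linarith)
      have h2' : 0 ≤ a / 2 * ‖p‖ ^ m :=
        mul_nonneg (by linarith) (Real.rpow_nonneg (norm_nonneg p) _)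
      nlinarith
    · push_neg at hpT
      have h1 : (1:ℝ) ≤ ‖p‖ := le_trans hT1 hpT.le
      have h2' : (2 * b / a) ^ ((m - s)⁻¹) ≤ ‖p‖ := le_trans (le_max_right _ _) hpT.le
      have hms : (0:ℝ) < m - s := by linarith
      have h3 : 2 * b / a ≤ ‖p‖ ^ (m - s) := by
        have h4 : ((2 * b / a) ^ ((m - s)⁻¹)) ^ (m - s) ≤ ‖p‖ ^ (m - s) :=
          Real.rpow_le_rpow (Real.rpow_nonneg (by positivity) _) h2' hms.le
        rwa [← Real.rpow_mul (by positivity), inv_mul_cancel₀ (ne_of_gt hms),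
          Real.rpow_one] at h4
      have h4 : ‖p‖ ^ (m - s) * ‖p‖ ^ s = ‖p‖ ^ m := by
        rw [← Real.rpow_add (by linarith : (0:ℝ) < ‖p‖)]
        ring_nf
      have h5 : 0 ≤ ‖p‖ ^ s := Real.rpow_nonneg (norm_nonneg p) _
      -- from 2b/a ≤ ‖p‖^{m-s}: multiply by (a/2)‖p‖^s
      have h6 : b * ‖p‖ ^ s ≤ a / 2 * ‖p‖ ^ m := by
        have := mul_le_mul_of_nonneg_right h3 (mul_nonneg (by linarith : (0:ℝ) ≤ a / 2) h5)
        calc b * ‖p‖ ^ s = 2 * b / a * (a / 2 * ‖p‖ ^ s) := by field_simp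
          _ ≤ ‖p‖ ^ (m - s) * (a / 2 * ‖p‖ ^ s) := this
          _ = a / 2 * ‖p‖ ^ m := by rw [← h4]; ring
      linarith
  set C : ℝ := max (2 / a) (b₀ + b * T ^ s + 1) with hCdef
  have hC0 : 0 < C := lt_max_of_lt_left (by positivity)
  refine ⟨C, hC0, ?_⟩
  intro x p
  obtain ⟨n, hn⟩ : ∃ n : ℕ, ‖p‖ ≤ 2 ^ n := by
    obtain ⟨n, hn⟩ := pow_unbounded_of_one_lt ‖p‖ one_lt_two
    exact ⟨n, hn.le⟩
  have hk := key n x p hn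
  have hb' := hbound p
  have hCinv : C⁻¹ ≤ a / 2 := by
    have h1 : 2 / a ≤ C := le_max_left _ _
    have h2' : (0:ℝ) < 2 / a := by positivity
    calc C⁻¹ ≤ (2 / a)⁻¹ := inv_anti₀ h2' h1
      _ = a / 2 := by rw [inv_div]
  have hC2 : b₀ + b * T ^ s ≤ C := le_trans (by linarith) (le_max_right (2 / a) _)
  have hpm : 0 ≤ ‖p‖ ^ m := Real.rpow_nonneg (norm_nonneg p) _
  have hfin : C⁻¹ * ‖p‖ ^ m ≤ a / 2 * ‖p‖ ^ m := mul_le_mul_of_nonneg_right hCinv hpm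
  linarith
end
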